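/- (Integer-programming form of the odd case.) Let k ≥ 3, n = 2k−1, and s ≥ 1. The minimum of Σ_{i=0}^{2k} a_i over all tuples a = (a_0, a_1, …, a_{2k}) of non-negative integers satisfying, for every arc S of 2k−3 consecutive vertices of the cycle on {1,…,2k−1}, both a_0 + Σ_{i∈S} a_i ≥ s(2k−3) and a_{2k} + Σ_{i∈S} a_i ≥ s(2k−3), equals s(2k−1). -/

import Mathlib

open MvPolynomial
open Fin.NatCast

/-- The subtree (arc) of `n-2` consecutive cycle vertices of the `n`-cycle `Q_n`
(on vertices `1,…,n` inside `Fin (n+2)`), starting at vertex `i+1`, for `i = 0,…,n-1`.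
The family `arcT n i`, `i < n`, is exactly the family `𝒯` of subtrees of `Q_n`
with `n-2` vertices. -/
def arcT (n i : ℕ) : Finset (Fin (n + 2)) :=
  (Finset.range (n - 2)).image fun t => (((i + t) % n + 1 : ℕ) : Fin (n + 2))

/-- The monomial prime ideal `⟨x_v⟩ + ⟨x_j : j ∈ S⟩`. -/
noncomputable def apexIdeal (K : Type*) [Field K] (n : ℕ) (v : Fin (n + 2))
    (S : Finset (Fin (n + 2))) : Ideal (MvPolynomial (Fin (n + 2)) K) :=
  Ideal.span (insert (X v) (X '' (S : Set (Fin (n+2))) : Set (MvPolynomial (Fin (n + 2)) K)))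

/-- The `m`-th symbolic power `I_{B_n}^{(m)} = ⋂_{S ∈ 𝒯} (I_{[0,S]}^m ∩ I_{[n+1,S]}^m)`. -/
noncomputable def symbPow (K : Type*) [Field K] (n m : ℕ) : Ideal (MvPolynomial (Fin (n + 2)) K) :=
  ⨅ i ∈ Finset.range n,
    apexIdeal K n 0 (arcT n i) ^ m ⊓ apexIdeal K n ((n + 1 : ℕ) : Fin (n + 2)) (arcT n i) ^ m

/-- The monomial `x_0^{a_0} x_1^{a_1} ⋯ x_{n+1}^{a_{n+1}}`. -/
noncomputable def monom (K : Type*) [Field K] (n : ℕ) (a : Fin (n + 2) → ℕ) :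
    MvPolynomial (Fin (n + 2)) K :=
  ∏ i, X i ^ a i

/-- `α_{n,m}`: the least total degree of a monomial lying in `I_{B_n}^{(m)}`. -/
noncomputable def alphaSymb (K : Type*) [Field K] (n m : ℕ) : ℕ :=
  sInf {d | ∃ a : Fin (n + 2) → ℕ, (∑ i, a i) = d ∧ monom K n a ∈ symbPow K n m}

/-- The Stanley–Reisner ideal `I_{B_n}` of the bipyramid `B_n`, presented by its
quadratic generators: `x_0 x_{n+1}` together with `x_i x_j` for non-adjacent
vertices `i, j` of the cycle `Q_n`. -/
noncomputable def bipyrIdeal (K : Type*) [Field K] (n : ℕ) : Ideal (MvPolynomial (Fin (n + 2)) K) :=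
  Ideal.span ({X (0 : Fin (n + 2)) * X ((n + 1 : ℕ) : Fin (n + 2))} ∪
    {p | ∃ i j : ℕ, 1 ≤ i ∧ i ≤ n ∧ 1 ≤ j ∧ j ≤ n ∧ i ≠ j ∧
      j ≠ i % n + 1 ∧ i ≠ j % n + 1 ∧
      p = X ((i : ℕ) : Fin (n + 2)) * X ((j : ℕ) : Fin (n + 2))})

/-!
Weight `s` on every cycle vertex and `0` on both apexes meets every constraint with equality
and has total `s n`, where `n = 2k - 1`. Conversely, summing the constraints of one apex over
all `n` arcs counts each cycle vertex `n - 2` times, so `n · a_apex + (n - 2) A ≥ n s (n - 2)`,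
where `A` is the total weight on the cycle. If `A < s n`, each apex then carries at least
`(n - 2)(s n - A) / n ≥ (s n - A) / 2` because `n ≥ 4`, and together they make up the deficit.
-/

open Finset

lemma sum_range_add_mod {M : Type*} [AddCommMonoid M] (n t : ℕ) (f : ℕ → M) :
    ∑ i ∈ range n, f ((i + t) % n) = ∑ i ∈ range n, f i := by
  rcases Nat.eq_zero_or_pos n with rfl | hn
  · simp
  have : NeZero n := ⟨hn.ne'⟩
  simp only [← Fin.sum_univ_eq_sum_range]
  have hval (i : Fin n) : (↑i + t) % n = ((i + (t : Fin n)) : Fin n).val := by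
    simp [Fin.val_add, Nat.add_mod]
  simp only [hval]
  exact Fintype.sum_equiv (Equiv.addRight (t : Fin n)) _ _ fun _ => rfl

section Arcs

variable {M : Type*} [AddCommMonoid M] {n : ℕ}

def cycleSum (n : ℕ) (a : Fin (n + 2) → M) : M :=
  ∑ v ∈ range n, a ((v + 1 : ℕ) : Fin (n + 2))

lemma sum_univ_eq_add_cycleSum_add (a : Fin (n + 2) → M) :
    ∑ j, a j = a 0 + cycleSum n a + a ((n + 1 : ℕ) : Fin (n + 2)) := by
  have : ∑ j, a j = ∑ v ∈ range (n + 2), a v := by simp [← Fin.sum_univ_eq_sum_range]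
  rw [this, sum_range_succ, sum_range_succ', cycleSum, Nat.cast_zero]
  abel

lemma sum_arcT (hn : 0 < n) (i : ℕ) (a : Fin (n + 2) → M) :
    ∑ j ∈ arcT n i, a j = ∑ t ∈ range (n - 2), a (((i + t) % n + 1 : ℕ) : Fin (n + 2)) := by
  refine sum_image fun t₁ h₁ t₂ h₂ h => ?_
  have hlt (t : ℕ) : (i + t) % n + 1 < n + 2 := by have := Nat.mod_lt (i + t) hn; omega
  have hmod := congrArg Fin.val h
  rw [Fin.val_cast_of_lt (hlt t₁), Fin.val_cast_of_lt (hlt t₂)] at hmod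
  simp only [coe_range, Set.mem_Iio] at h₁ h₂
  exact Nat.ModEq.eq_of_lt_of_lt (Nat.ModEq.add_left_cancel' i (Nat.succ_injective hmod))
    (by omega) (by omega)

lemma sum_range_sum_arcT (hn : 0 < n) (a : Fin (n + 2) → M) :
    ∑ i ∈ range n, ∑ j ∈ arcT n i, a j = (n - 2) • cycleSum n a := by
  simp only [sum_arcT hn]
  rw [sum_comm, sum_congr rfl fun t _ =>
    sum_range_add_mod n t fun v => a ((v + 1 : ℕ) : Fin (n + 2)), sum_const, card_range, cycleSum]

end Arcs

def IsApexArcCover (n m : ℕ) (a : Fin (n + 2) → ℕ) : Prop :=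
  ∀ i < n, m ≤ a 0 + ∑ j ∈ arcT n i, a j ∧
    m ≤ a ((n + 1 : ℕ) : Fin (n + 2)) + ∑ j ∈ arcT n i, a j

lemma mul_le_of_forall_le_add_sum_arcT {n m x : ℕ} (hn : 0 < n) {a : Fin (n + 2) → ℕ}
    (h : ∀ i < n, m ≤ x + ∑ j ∈ arcT n i, a j) :
    n * m ≤ n * x + (n - 2) * cycleSum n a := by
  have := sum_le_sum fun i (hi : i ∈ range n) => h i (mem_range.1 hi)
  simpa [sum_add_distrib, sum_range_sum_arcT hn] using this

lemma le_add_of_mul_le_add_mul {n s b c A : ℕ} (hn : 4 ≤ n)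
    (hb : n * (s * (n - 2)) ≤ n * b + (n - 2) * A)
    (hc : n * (s * (n - 2)) ≤ n * c + (n - 2) * A) : s * n ≤ b + A + c := by
  obtain ⟨p, rfl⟩ : ∃ p, n = p + 2 := ⟨n - 2, by omega⟩
  simp only [Nat.add_sub_cancel] at hb hc
  by_contra! hlt
  nlinarith

lemma IsApexArcCover.mul_le_sum {n : ℕ} (hn : 4 ≤ n) {s : ℕ} {a : Fin (n + 2) → ℕ}
    (ha : IsApexArcCover n (s * (n - 2)) a) : s * n ≤ ∑ j, a j := by
  rw [sum_univ_eq_add_cycleSum_add]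
  exact le_add_of_mul_le_add_mul hn
    (mul_le_of_forall_le_add_sum_arcT (by omega) fun i hi => (ha i hi).1)
    (mul_le_of_forall_le_add_sum_arcT (by omega) fun i hi => (ha i hi).2)

def cycleIndicator (n s : ℕ) (j : Fin (n + 2)) : ℕ :=
  if (j : ℕ) ∈ Icc 1 n then s else 0

section CycleIndicator

variable {n : ℕ} (s : ℕ)

lemma cycleIndicator_succ {v : ℕ} (hv : v < n) :
    cycleIndicator n s ((v + 1 : ℕ) : Fin (n + 2)) = s := by
  rw [cycleIndicator, Fin.val_cast_of_lt (by omega), if_pos (by simp; omega)]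

lemma cycleIndicator_zero : cycleIndicator n s 0 = 0 := by
  simp [cycleIndicator]

lemma cycleIndicator_last : cycleIndicator n s ((n + 1 : ℕ) : Fin (n + 2)) = 0 := by
  rw [cycleIndicator, Fin.val_cast_of_lt (by omega), if_neg (by simp)]

lemma cycleSum_cycleIndicator : cycleSum n (cycleIndicator n s) = n * s := by
  rw [cycleSum, sum_congr rfl fun v hv => cycleIndicator_succ s (mem_range.1 hv), sum_const,
    card_range, smul_eq_mul]

lemma sum_cycleIndicator : ∑ j, cycleIndicator n s j = s * n := by
  rw [sum_univ_eq_add_cycleSum_add, cycleSum_cycleIndicator, cycleIndicator_zero,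
    cycleIndicator_last, zero_add, add_zero, Nat.mul_comm]

lemma sum_arcT_cycleIndicator (hn : 0 < n) (i : ℕ) :
    ∑ j ∈ arcT n i, cycleIndicator n s j = (n - 2) * s := by
  rw [sum_arcT hn, sum_congr rfl fun t _ => cycleIndicator_succ s (Nat.mod_lt (i + t) hn),
    sum_const, card_range, smul_eq_mul]

lemma isApexArcCover_cycleIndicator (hn : 0 < n) :
    IsApexArcCover n (s * (n - 2)) (cycleIndicator n s) := by
  intro i _
  rw [cycleIndicator_zero, cycleIndicator_last, sum_arcT_cycleIndicator s hn, zero_add,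
    Nat.mul_comm]
  exact ⟨le_rfl, le_rfl⟩

end CycleIndicator

theorem sInf_sum_isApexArcCover {n : ℕ} (hn : 4 ≤ n) (s : ℕ) :
    sInf {d | ∃ a : Fin (n + 2) → ℕ, ∑ j, a j = d ∧ IsApexArcCover n (s * (n - 2)) a} = s * n :=
  IsLeast.csInf_eq ⟨⟨_, sum_cycleIndicator s, isApexArcCover_cycleIndicator s (by omega)⟩,
    by rintro _ ⟨a, rfl, ha⟩; exact ha.mul_le_sum hn⟩

theorem ip_odd_case_general (k s : ℕ) (hk : 3 ≤ k) :
    sInf {d : ℕ | ∃ a : Fin (2 * k - 1 + 2) → ℕ, (∑ i, a i) = d ∧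
        ∀ i < 2 * k - 1,
          s * (2 * k - 3) ≤ a 0 + ∑ j ∈ arcT (2 * k - 1) i, a j ∧
          s * (2 * k - 3) ≤ a ((2 * k : ℕ) : Fin (2 * k - 1 + 2)) +
            ∑ j ∈ arcT (2 * k - 1) i, a j}
      = s * (2 * k - 1) := by
  set n := 2 * k - 1
  have h2k : 2 * k = n + 1 := by omega
  have h2k3 : 2 * k - 3 = n - 2 := by omega
  rw [h2k3, h2k]
  exact sInf_sum_isApexArcCover (by omega) s

/-- Integer-programming form of the odd case: for `k ≥ 3` and `s ≥ 1`, the minimum of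
`Σ a_i` over non-negative integer tuples `a = (a_0,…,a_{2k})` satisfying
`a_0 + Σ_{i∈S} a_i ≥ s(2k-3)` and `a_{2k} + Σ_{i∈S} a_i ≥ s(2k-3)` for every arc `S`
of `2k-3` consecutive vertices of the `(2k-1)`-cycle, equals `s(2k-1)`. -/
theorem ip_odd_case (k s : ℕ) (hk : 3 ≤ k) (hs : 1 ≤ s) :
    sInf {d : ℕ | ∃ a : Fin (2 * k - 1 + 2) → ℕ, (∑ i, a i) = d ∧
        ∀ i < 2 * k - 1,
          s * (2 * k - 3) ≤ a 0 + ∑ j ∈ arcT (2 * k - 1) i, a j ∧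
          s * (2 * k - 3) ≤ a ((2 * k : ℕ) : Fin (2 * k - 1 + 2)) +
            ∑ j ∈ arcT (2 * k - 1) i, a j}
      = s * (2 * k - 1) :=
  ip_odd_case_general k s hk
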